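/- arXiv:2012.00349 — 2 statements merged into one kernel-verified Lean document; each statement's English description precedes it below -/
import Mathlib

section
/- Assume the graph whose vertices are the cells 𝒯 and which has an edge between K and L for every σ = K|L ∈ Σ is connected, and assume there exists (ρ̂, F̂) ∈ 𝒞_{N,𝒯} with B_{N,𝒯}(ρ̂, F̂) < +∞. Then there exists a constant C > 0 independent of μ such that for every μ ∈ (0,1], any minimizer (ρ^μ, F^μ) of B_{N,𝒯} + μ J_{N,𝒯} over 𝒞_{N,𝒯} satisfies (ρ^μ)^k_{K'} ≥ C μ for every K' ∈ 𝒯' and every k ∈ {1,…,N}. -/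
open scoped BigOperators ENNReal RealInnerProductSpace
open Finset

namespace OTFV

/-- The Benamou–Brenier action density for a scalar flux value. -/
noncomputable def Bact (p q : ℝ) : ℝ≥0∞ :=
  if 0 < p then ENNReal.ofReal (q ^ 2 / (2 * p))
  else if p = 0 ∧ q = 0 then 0 else ⊤

/-- Combinatorial/metric data of an admissible TPFA mesh: cells `T`, internal
edges `E`; an edge `σ` joins the two distinct cells `e1 σ` and `e2 σ`. -/
structure Mesh (T E : Type*) where
  e1 : E → T
  e2 : E → T
  ne : ∀ σ, e1 σ ≠ e2 σ
  m : T → ℝ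
  m_pos : ∀ K, 0 < m K
  mS : E → ℝ
  mS_pos : ∀ σ, 0 < mS σ
  dS : E → ℝ
  dS_pos : ∀ σ, 0 < dS σ
  d1 : E → ℝ   -- d_{K,σ} for K = e1 σ
  d2 : E → ℝ   -- d_{L,σ} for L = e2 σ
  d1_pos : ∀ σ, 0 < d1 σ
  d2_pos : ∀ σ, 0 < d2 σ
  d_sum : ∀ σ, d1 σ + d2 σ = dS σ

variable {T T' E : Type*}

/-- A conservative flux is encoded by its value `F σ = F_{K,σ}` on the side `K = e1 σ`
(so that `F_{L,σ} = -F σ` for `L = e2 σ`).  Discrete divergence. -/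
noncomputable def divT [Fintype E] [DecidableEq T] (M : Mesh T E) (F : E → ℝ) (K : T) : ℝ :=
  (∑ σ, ((if M.e1 σ = K then F σ else 0) + (if M.e2 σ = K then -F σ else 0)) * M.mS σ) / M.m K

/-- Discrete gradient, oriented from `e1 σ` to `e2 σ` (the `(K,σ)` component, `K = e1 σ`). -/
noncomputable def gradS (M : Mesh T E) (a : T → ℝ) (σ : E) : ℝ :=
  (a (M.e2 σ) - a (M.e1 σ)) / M.dS σ

/-- Linear (weighted arithmetic mean) reconstruction on edges. -/
noncomputable def linRec (M : Mesh T E) (a : T → ℝ) (σ : E) : ℝ :=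
  (M.d1 σ / M.dS σ) * a (M.e1 σ) + (M.d2 σ / M.dS σ) * a (M.e2 σ)

/-- Injection from coarse densities to fine densities, `p` maps a fine cell to its coarse cell. -/
def inj (p : T → T') (ρ : T' → ℝ) : T → ℝ := fun K => ρ (p K)

/-- Mass of a coarse cell. -/
noncomputable def coarseM [Fintype T] [DecidableEq T'] (M : Mesh T E) (p : T → T') (K' : T') : ℝ :=
  ∑ K ∈ Finset.univ.filter (fun K => p K = K'), M.m K

/-- Adjoint of the injection. -/
noncomputable def injAdj [Fintype T] [DecidableEq T'] (M : Mesh T E) (p : T → T')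
    (a : T → ℝ) (K' : T') : ℝ :=
  (∑ K ∈ Finset.univ.filter (fun K => p K = K'), a K * M.m K) / coarseM M p K'

/-- Adjoint of the linear reconstruction, `(L_Σ^* u)_K = Σ_{σ∈Σ_K} u_σ m_σ d_{K,σ}/m_K`. -/
noncomputable def linRecAdj [Fintype E] [DecidableEq T] (M : Mesh T E) (u : E → ℝ) (K : T) : ℝ :=
  (∑ σ, ((if M.e1 σ = K then u σ * M.mS σ * M.d1 σ else 0) +
          (if M.e2 σ = K then u σ * M.mS σ * M.d2 σ else 0))) / M.m K

/-- `R_{𝒯'} = 𝕀^* ∘ L_Σ^*`. -/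
noncomputable def coarseRec [Fintype T] [Fintype E] [DecidableEq T] [DecidableEq T']
    (M : Mesh T E) (p : T → T') (u : E → ℝ) (K' : T') : ℝ :=
  injAdj M p (linRecAdj M u) K'

/-- Weighted scalar product on the coarse space. -/
noncomputable def iprodC [Fintype T] [Fintype T'] [DecidableEq T'] (M : Mesh T E) (p : T → T')
    (a b : T' → ℝ) : ℝ :=
  ∑ K', a K' * b K' * coarseM M p K'

/-- The discrete Benamou–Brenier functional `B_{N,𝒯}`; the time step is `τ = 1/(N+1)`,
`ρ k.succ` stands for `ρ^k` and `ρ k.castSucc` for `ρ^{k-1}`, `k = 1, …, N+1`. -/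
noncomputable def Benergy [Fintype E] [Fintype T'] (M : Mesh T E) (p : T → T') (N : ℕ)
    (ρ : Fin (N+2) → T' → ℝ) (F : Fin (N+1) → E → ℝ) : ℝ≥0∞ :=
  if ∀ k K', 0 ≤ ρ k K' then
    ∑ k : Fin (N+1),
      ENNReal.ofReal ((1:ℝ)/(N+1)) *
        ∑ σ, Bact (linRec M (inj p (fun K' => (ρ k.succ K' + ρ k.castSucc K') / 2)) σ) (F k σ) *
          ENNReal.ofReal (M.mS σ * M.dS σ)
  else ⊤

/-- The discrete continuity equation. -/
def ContEq [Fintype E] [DecidableEq T] (M : Mesh T E) (p : T → T') (N : ℕ)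
    (ρ : Fin (N+2) → T' → ℝ) (F : Fin (N+1) → E → ℝ) : Prop :=
  ∀ (k : Fin (N+1)) (K : T),
    (ρ k.succ (p K) - ρ k.castSucc (p K)) / ((1:ℝ)/(N+1)) + divT M (F k) K = 0

/-- The constraint set `𝒞_{N,𝒯}`. -/
def Cset [Fintype E] [DecidableEq T] (M : Mesh T E) (p : T → T') (N : ℕ)
    (ρin ρf : T' → ℝ) : Set ((Fin (N+2) → T' → ℝ) × (Fin (N+1) → E → ℝ)) :=
  {x | x.1 0 = ρin ∧ x.1 (Fin.last (N+1)) = ρf ∧ ContEq M p N x.1 x.2}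

/-- The (halved, squared) discrete Wasserstein distance: `W² = 2 inf B`. -/
noncomputable def Wdist2 [Fintype E] [Fintype T'] [DecidableEq T] (M : Mesh T E) (p : T → T')
    (N : ℕ) (ρin ρf : T' → ℝ) : ℝ≥0∞ :=
  2 * ⨅ (x : (Fin (N+2) → T' → ℝ) × (Fin (N+1) → E → ℝ)) (_ : x ∈ Cset M p N ρin ρf),
    Benergy M p N x.1 x.2

/-- Logarithmic barrier. -/
noncomputable def Jlog (x : ℝ) : EReal := if 0 < x then ((- Real.log x : ℝ) : EReal) else ⊤

/-- The barrier functional `J_{N,𝒯}` (only the interior times `k = 1, …, N`). -/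
noncomputable def Jbar [Fintype T] [Fintype T'] [DecidableEq T'] (M : Mesh T E) (p : T → T')
    (N : ℕ) (ρ : Fin (N+2) → T' → ℝ) : EReal :=
  ∑ k : Fin N, (((1:ℝ)/(N+1) : ℝ) : EReal) *
    ∑ K', Jlog (ρ (k.succ.castSucc) K') * ((coarseM M p K' : ℝ) : EReal)

/-- Perturbed objective `B_{N,𝒯} + μ J_{N,𝒯}`, with values in `EReal`. -/
noncomputable def Pobj [Fintype T] [Fintype T'] [Fintype E] [DecidableEq T'] (M : Mesh T E)
    (p : T → T') (N : ℕ) (μ : ℝ) (ρ : Fin (N+2) → T' → ℝ) (F : Fin (N+1) → E → ℝ) : EReal :=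
  (Benergy M p N ρ F : EReal) + (μ : EReal) * Jbar M p N ρ

/-- Connectivity of the graph of cells induced by the internal edges. -/
def MeshConnected (M : Mesh T E) : Prop :=
  ∀ K L : T, Relation.ReflTransGen
    (fun a b => ∃ σ, (M.e1 σ = a ∧ M.e2 σ = b) ∨ (M.e1 σ = b ∧ M.e2 σ = a)) K L

end OTFV

open OTFV

/-!
Mix a minimiser `x` with weight `μ/2` with a competitor `y` whose interior densities all equal a
constant `c > 0`. The mixture stays in `𝒞` (an affine set) and, `q²/(2p)` being jointly convex,
its energy exceeds that of `x` by at most `(μ/2) B(y)`. Mixing raises each barrier term by at most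
`log 2` times its weight, while at a cell where `x` is small it lowers it by at least
`log (μ c / (2 x))` times its weight; minimality of `x` bounds this logarithm by a constant
independent of `μ`. The competitor exists because on a connected mesh a flux realises every
mass-preserving change of density.
-/

namespace EReal

lemma sum_ne_bot {ι : Type*} {s : Finset ι} {f : ι → EReal} (h : ∀ i ∈ s, f i ≠ ⊥) :
    ∑ i ∈ s, f i ≠ ⊥ :=
  Finset.sum_induction f (· ≠ ⊥) (fun _ _ ha hb => add_ne_bot_iff.2 ⟨ha, hb⟩) zero_ne_bot h

lemma sum_eq_top_of_ne_bot {ι : Type*} [DecidableEq ι] {s : Finset ι} {f : ι → EReal}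
    (h : ∀ i ∈ s, f i ≠ ⊥) {i : ι} (hi : i ∈ s) (hfi : f i = ⊤) : ∑ i ∈ s, f i = ⊤ := by
  rw [← Finset.add_sum_erase _ _ hi, hfi]
  exact top_add_of_ne_bot (sum_ne_bot fun j hj => h j (Finset.mem_of_mem_erase hj))

lemma coe_finsetSum {ι : Type*} (s : Finset ι) (f : ι → ℝ) :
    ((∑ i ∈ s, f i : ℝ) : EReal) = ∑ i ∈ s, (f i : EReal) :=
  map_sum (⟨⟨(↑), coe_zero⟩, coe_add⟩ : ℝ →+ EReal) f s

lemma coe_mul_ne_bot {r : ℝ} (hr : 0 ≤ r) {x : EReal} (hx : x ≠ ⊥) : (r : EReal) * x ≠ ⊥ :=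
  (mul_ne_bot _ _).2 ⟨Or.inl (coe_ne_bot r), Or.inr hx, Or.inl (coe_ne_top r),
    Or.inl (EReal.coe_nonneg.2 hr)⟩

end EReal

namespace OTFV

lemma Bact_ne_top_iff {p q : ℝ} : Bact p q ≠ ⊤ ↔ 0 ≤ p ∧ (p = 0 → q = 0) := by
  unfold Bact
  split_ifs with h₁ h₂
  · exact iff_of_true ENNReal.ofReal_ne_top ⟨h₁.le, fun h => absurd h h₁.ne'⟩
  · exact iff_of_true ENNReal.zero_ne_top ⟨h₂.1.ge, fun _ => h₂.2⟩
  · simp only [ne_eq, not_true_eq_false, false_iff, not_and]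
    intro hp hq
    rcases hp.eq_or_lt with h | h
    · exact h₂ ⟨h.symm, hq h.symm⟩
    · exact h₁ h

lemma Bact_of_nonneg {p q : ℝ} (hp : 0 ≤ p) (hq : p = 0 → q = 0) :
    Bact p q = ENNReal.ofReal (q ^ 2 / (2 * p)) := by
  rcases hp.eq_or_lt with rfl | hp
  · simp [Bact, hq rfl]
  · simp [Bact, hp]

lemma sq_add_div_add_le {P₁ P₂ q₁ q₂ : ℝ} (hP₁ : 0 ≤ P₁) (hq₁ : P₁ = 0 → q₁ = 0)
    (hP₂ : 0 ≤ P₂) (hq₂ : P₂ = 0 → q₂ = 0) :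
    (q₁ + q₂) ^ 2 / (P₁ + P₂) ≤ q₁ ^ 2 / P₁ + q₂ ^ 2 / P₂ := by
  rcases hP₁.eq_or_lt with rfl | hP₁
  · simp [hq₁ rfl]
  rcases hP₂.eq_or_lt with rfl | hP₂
  · simp [hq₂ rfl]
  simpa [Fin.sum_univ_two] using Finset.sq_sum_div_le_sum_sq_div Finset.univ ![q₁, q₂]
    (g := ![P₁, P₂]) (by simp [Fin.forall_fin_two, hP₁, hP₂])

lemma Bact_add_le (p₁ q₁ p₂ q₂ : ℝ) :
    Bact (p₁ + p₂) (q₁ + q₂) ≤ Bact p₁ q₁ + Bact p₂ q₂ := by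
  by_cases h₁ : Bact p₁ q₁ = ⊤
  · simp [h₁]
  by_cases h₂ : Bact p₂ q₂ = ⊤
  · simp [h₂]
  obtain ⟨hp₁, hq₁⟩ := Bact_ne_top_iff.1 h₁
  obtain ⟨hp₂, hq₂⟩ := Bact_ne_top_iff.1 h₂
  have hq : p₁ + p₂ = 0 → q₁ + q₂ = 0 := fun h => by
    rw [hq₁ (by linarith), hq₂ (by linarith), add_zero]
  rw [Bact_of_nonneg (add_nonneg hp₁ hp₂) hq, Bact_of_nonneg hp₁ hq₁, Bact_of_nonneg hp₂ hq₂,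
    ← ENNReal.ofReal_add (by positivity) (by positivity), mul_add]
  exact ENNReal.ofReal_le_ofReal <| sq_add_div_add_le (by positivity)
    (fun h => hq₁ (by linarith)) (by positivity) (fun h => hq₂ (by linarith))

lemma Bact_mul {a : ℝ} (ha : 0 ≤ a) (p q : ℝ) :
    Bact (a * p) (a * q) = ENNReal.ofReal a * Bact p q := by
  rcases ha.eq_or_lt with rfl | ha
  · simp [Bact]
  have hiff : (0 ≤ a * p ∧ (a * p = 0 → a * q = 0)) ↔ (0 ≤ p ∧ (p = 0 → q = 0)) := by
    simp [mul_nonneg_iff_of_pos_left ha, ha.ne']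
  by_cases h : Bact p q = ⊤
  · rw [h, ENNReal.mul_top (by simpa using ha)]
    by_contra h'
    exact Bact_ne_top_iff.2 (hiff.1 (Bact_ne_top_iff.1 h')) h
  obtain ⟨hp, hq⟩ := Bact_ne_top_iff.1 h
  obtain ⟨hap, haq⟩ := hiff.2 ⟨hp, hq⟩
  rw [Bact_of_nonneg hp hq, Bact_of_nonneg hap haq, ← ENNReal.ofReal_mul ha.le]
  congr 1
  rcases hp.eq_or_lt with rfl | hp
  · simp
  · field_simp

lemma Bact_smul_add_le {a b : ℝ} (ha : 0 ≤ a) (hb : 0 ≤ b) (p₁ q₁ p₂ q₂ : ℝ) :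
    Bact (a * p₁ + b * p₂) (a * q₁ + b * q₂) ≤
      ENNReal.ofReal a * Bact p₁ q₁ + ENNReal.ofReal b * Bact p₂ q₂ := by
  rw [← Bact_mul ha, ← Bact_mul hb]
  exact Bact_add_le _ _ _ _

section Energy
variable {T T' E : Type*} (M : Mesh T E) (p : T → T') {N : ℕ}

lemma linRec_pos {a : T → ℝ} (ha : ∀ K, 0 < a K) (σ : E) : 0 < linRec M a σ := by
  have := M.d1_pos σ; have := M.d2_pos σ; have := M.dS_pos σ
  have := ha (M.e1 σ); have := ha (M.e2 σ)
  unfold linRec; positivity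

lemma linRec_inj_mean_smul_add (ρ₁ ρ₂ : Fin (N+2) → T' → ℝ) (a b : ℝ) (k : Fin (N+1)) (σ : E) :
    linRec M (inj p fun K' => ((a • ρ₁ + b • ρ₂) k.succ K' + (a • ρ₁ + b • ρ₂) k.castSucc K') / 2) σ
      = a * linRec M (inj p fun K' => (ρ₁ k.succ K' + ρ₁ k.castSucc K') / 2) σ +
        b * linRec M (inj p fun K' => (ρ₂ k.succ K' + ρ₂ k.castSucc K') / 2) σ := by
  simp only [linRec, inj, Pi.add_apply, Pi.smul_apply, smul_eq_mul]
  ring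

lemma nonneg_of_Benergy_ne_top [Fintype E] [Fintype T'] {ρ : Fin (N+2) → T' → ℝ}
    {F : Fin (N+1) → E → ℝ} (h : Benergy M p N ρ F ≠ ⊤) : ∀ j K', 0 ≤ ρ j K' := by
  by_contra hρ
  exact h (if_neg hρ)

lemma Benergy_ne_top_of_pos [Fintype E] [Fintype T'] {ρ : Fin (N+2) → T' → ℝ}
    (F : Fin (N+1) → E → ℝ) (hρ : ∀ j K', 0 ≤ ρ j K')
    (hpos : ∀ (k : Fin (N+1)) K', 0 < ρ k.succ K' + ρ k.castSucc K') :
    Benergy M p N ρ F ≠ ⊤ := by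
  rw [Benergy, if_pos hρ]
  refine ENNReal.sum_ne_top.2 fun k _ => ENNReal.mul_ne_top ENNReal.ofReal_ne_top <|
    ENNReal.sum_ne_top.2 fun σ _ => ENNReal.mul_ne_top ?_ ENNReal.ofReal_ne_top
  have := linRec_pos M (fun K => half_pos (hpos k (p K))) σ
  exact Bact_ne_top_iff.2 ⟨this.le, fun h => absurd h this.ne'⟩

lemma Benergy_smul_add_le [Fintype E] [Fintype T'] {ρ₁ ρ₂ : Fin (N+2) → T' → ℝ}
    (F₁ F₂ : Fin (N+1) → E → ℝ) (hρ₁ : ∀ j K', 0 ≤ ρ₁ j K') (hρ₂ : ∀ j K', 0 ≤ ρ₂ j K')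
    {a b : ℝ} (ha : 0 ≤ a) (hb : 0 ≤ b) :
    Benergy M p N (a • ρ₁ + b • ρ₂) (a • F₁ + b • F₂) ≤
      ENNReal.ofReal a * Benergy M p N ρ₁ F₁ + ENNReal.ofReal b * Benergy M p N ρ₂ F₂ := by
  have hρ : ∀ j K', 0 ≤ (a • ρ₁ + b • ρ₂) j K' := fun j K' => by
    have := hρ₁ j K'; have := hρ₂ j K'
    simp only [Pi.add_apply, Pi.smul_apply, smul_eq_mul]; positivity
  rw [Benergy, Benergy, Benergy, if_pos hρ, if_pos hρ₁, if_pos hρ₂]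
  simp only [Finset.mul_sum, ← Finset.sum_add_distrib]
  gcongr with k _ σ _
  rw [show ∀ x y z w : ℝ≥0∞, ENNReal.ofReal a * (z * (x * w)) + ENNReal.ofReal b * (z * (y * w))
      = z * ((ENNReal.ofReal a * x + ENNReal.ofReal b * y) * w) from fun _ _ _ _ => by ring,
    linRec_inj_mean_smul_add]
  gcongr
  exact Bact_smul_add_le ha hb _ _ _ _

end Energy

section Flux
variable {T E : Type*} [Fintype E] [DecidableEq T] (M : Mesh T E)

noncomputable def netFlux : (E → ℝ) →ₗ[ℝ] T → ℝ where
  toFun F K := ∑ σ, ((if M.e1 σ = K then F σ else 0) + (if M.e2 σ = K then -F σ else 0)) * M.mS σ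
  map_add' F G := by
    ext K
    simp only [Pi.add_apply, ← Finset.sum_add_distrib]
    exact Finset.sum_congr rfl fun σ _ => by split_ifs <;> ring
  map_smul' c F := by
    ext K
    simp only [Pi.smul_apply, smul_eq_mul, RingHom.id_apply, Finset.mul_sum]
    exact Finset.sum_congr rfl fun σ _ => by split_ifs <;> ring

lemma divT_eq_netFlux_div (F : E → ℝ) (K : T) : divT M F K = netFlux M F K / M.m K := rfl

lemma netFlux_single [DecidableEq E] (σ : E) :
    netFlux M (Pi.single σ (M.mS σ)⁻¹) = Pi.single (M.e1 σ) 1 - Pi.single (M.e2 σ) 1 := by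
  ext K
  have hmS := (M.mS_pos σ).ne'
  simp only [netFlux, LinearMap.coe_mk, AddHom.coe_mk, Pi.sub_apply, Pi.single_apply]
  rw [Finset.sum_eq_single σ (fun τ _ hτ => by simp [hτ]) (by simp)]
  rcases eq_or_ne K (M.e1 σ) with rfl | h₁
  · simp [M.ne σ, (M.ne σ).symm, hmS]
  rcases eq_or_ne K (M.e2 σ) with rfl | h₂
  · simp [h₁, h₁.symm, hmS]
  · simp [h₁, h₂, h₁.symm, h₂.symm]

lemma single_sub_single_mem_range_netFlux (hconn : MeshConnected M) (K L : T) :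
    Pi.single L 1 - Pi.single K 1 ∈ LinearMap.range (netFlux M) := by
  classical
  induction hconn K L with
  | refl => simp
  | @tail b c _ hbc ih =>
    rw [← sub_add_sub_cancel _ (Pi.single b 1)]
    refine add_mem ?_ ih
    obtain ⟨σ, ⟨rfl, rfl⟩ | ⟨rfl, rfl⟩⟩ := hbc
    · rw [← neg_sub, ← netFlux_single]
      exact neg_mem (LinearMap.mem_range_self _ _)
    · rw [← netFlux_single]
      exact LinearMap.mem_range_self _ _

lemma exists_netFlux_eq [Fintype T] (hconn : MeshConnected M) {g : T → ℝ} (hg : ∑ K, g K = 0) :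
    ∃ F, netFlux M F = g := by
  rcases isEmpty_or_nonempty T with hT | ⟨⟨K₀⟩⟩
  · exact ⟨0, Subsingleton.elim _ _⟩
  have hg' : ∑ K, g K • (Pi.single K 1 - Pi.single K₀ 1) = g := by
    simp only [smul_sub, Finset.sum_sub_distrib, ← Finset.sum_smul, hg, zero_smul, sub_zero]
    conv_rhs => rw [← Finset.univ_sum_single g]
    simp [← Pi.single_smul']
  rw [← LinearMap.mem_range, ← hg']
  exact Submodule.sum_mem _ fun K _ =>
    Submodule.smul_mem _ _ (single_sub_single_mem_range_netFlux M hconn K₀ K)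

end Flux

section Constraint
variable {T T' E : Type*} (M : Mesh T E) (p : T → T') {N : ℕ}

lemma sum_inj_mul_m [Fintype T] [Fintype T'] [DecidableEq T'] (h : T' → ℝ) :
    ∑ K, inj p h K * M.m K = ∑ K', h K' * coarseM M p K' := by
  rw [← Finset.sum_fiberwise Finset.univ p]
  refine Finset.sum_congr rfl fun K' _ => ?_
  rw [coarseM, Finset.mul_sum]
  exact Finset.sum_congr rfl fun K hK => by rw [inj, (Finset.mem_filter.1 hK).2]

variable [Fintype E] [DecidableEq T]

lemma convex_Cset (ρin ρf : T' → ℝ) : Convex ℝ (Cset M p N ρin ρf) := by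
  rintro x ⟨hx₀, hx₁, hx⟩ y ⟨hy₀, hy₁, hy⟩ a b - - hab
  refine ⟨?_, ?_, fun k K => ?_⟩
  · simp [hx₀, hy₀, ← add_smul, hab]
  · simp [hx₁, hy₁, ← add_smul, hab]
  · have hxk := hx k K
    have hyk := hy k K
    simp only [divT_eq_netFlux_div, Prod.fst_add, Prod.snd_add, Prod.smul_fst, Prod.smul_snd,
      map_add, map_smul, Pi.add_apply, Pi.smul_apply, smul_eq_mul] at hxk hyk ⊢
    linear_combination a * hxk + b * hyk

lemma exists_contEq [Fintype T] [Fintype T'] [DecidableEq T'] (hconn : MeshConnected M)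
    (ρ : Fin (N+2) → T' → ℝ) (hmass : ∀ k : Fin (N+1),
      ∑ K', ρ k.succ K' * coarseM M p K' = ∑ K', ρ k.castSucc K' * coarseM M p K') :
    ∃ F, ContEq M p N ρ F := by
  have hflux (k : Fin (N+1)) : ∃ F, netFlux M F =
      fun K => -((N+1) * inj p (ρ k.succ - ρ k.castSucc) K * M.m K) := by
    refine exists_netFlux_eq M hconn ?_
    simp only [Finset.sum_neg_distrib, mul_assoc, ← Finset.mul_sum, sum_inj_mul_m, Pi.sub_apply,
      sub_mul, Finset.sum_sub_distrib, hmass, sub_self, mul_zero, neg_zero]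
  choose F hF using hflux
  refine ⟨F, fun k K => ?_⟩
  rw [divT_eq_netFlux_div, hF]
  have := (M.m_pos K).ne'
  simp only [inj, Pi.sub_apply]
  field_simp
  ring

end Constraint

section Competitor
variable {T T' E : Type*} {N : ℕ}

/-- `interiorDens ρ (k, K')` is `ρ^{k+1}_{K'}`, the density at the interior time `k + 1`. -/
def interiorDens (ρ : Fin (N+2) → T' → ℝ) (i : Fin N × T') : ℝ := ρ i.1.succ.castSucc i.2

def constInteriorPath (N : ℕ) (ρin ρf : T' → ℝ) (c : ℝ) : Fin (N+2) → T' → ℝ :=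
  fun j => if j = 0 then ρin else if j = Fin.last (N+1) then ρf else fun _ => c

variable {ρin ρf : T' → ℝ} {c : ℝ}

lemma constInteriorPath_of_ne {j : Fin (N+2)} (h₀ : j ≠ 0) (h₁ : j ≠ Fin.last (N+1)) (K' : T') :
    constInteriorPath N ρin ρf c j K' = c := by
  simp [constInteriorPath, h₀, h₁]

lemma interiorDens_constInteriorPath (i : Fin N × T') :
    interiorDens (constInteriorPath N ρin ρf c) i = c :=
  constInteriorPath_of_ne (by simp [Fin.ext_iff]) (by simp [Fin.ext_iff]; omega) i.2

lemma constInteriorPath_nonneg (hin : ∀ K', 0 ≤ ρin K') (hf : ∀ K', 0 ≤ ρf K') (hc : 0 ≤ c)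
    (j : Fin (N+2)) (K' : T') : 0 ≤ constInteriorPath N ρin ρf c j K' := by
  unfold constInteriorPath
  split_ifs
  exacts [hin K', hf K', hc]

lemma constInteriorPath_succ_add_castSucc_pos (hN : 0 < N) (hin : ∀ K', 0 ≤ ρin K')
    (hf : ∀ K', 0 ≤ ρf K') (hc : 0 < c) (k : Fin (N+1)) (K' : T') :
    0 < constInteriorPath N ρin ρf c k.succ K' + constInteriorPath N ρin ρf c k.castSucc K' := by
  have := constInteriorPath_nonneg hin hf hc.le k.succ K'
  have := constInteriorPath_nonneg hin hf hc.le k.castSucc K'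
  rcases eq_or_ne k 0 with rfl | hk
  · rw [constInteriorPath_of_ne (by simp) (by simp [Fin.ext_iff]; omega)]
    linarith
  · rw [constInteriorPath_of_ne (c := c) (by simpa using hk) (Fin.castSucc_lt_last k).ne]
    linarith

lemma sum_constInteriorPath_mul [Fintype T'] (w : T' → ℝ)
    (hmass : ∑ K', ρin K' * w K' = ∑ K', ρf K' * w K') (hc : c * ∑ K', w K' = ∑ K', ρin K' * w K')
    (j : Fin (N+2)) : ∑ K', constInteriorPath N ρin ρf c j K' * w K' = ∑ K', ρin K' * w K' := by
  unfold constInteriorPath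
  split_ifs
  exacts [rfl, hmass.symm, by rw [← Finset.mul_sum, hc]]

lemma exists_mem_Cset_interior_eq_const [Fintype T] [Fintype T'] [Fintype E] [DecidableEq T]
    [DecidableEq T'] (M : Mesh T E) (hconn : MeshConnected M) (p : T → T') (hN : 0 < N)
    (hp : ∀ K', 0 < coarseM M p K') (hin : ∀ K', 0 ≤ ρin K') (hf : ∀ K', 0 ≤ ρf K')
    (hmass : ∑ K', ρin K' * coarseM M p K' = ∑ K', ρf K' * coarseM M p K')
    (hmasspos : 0 < ∑ K', ρin K' * coarseM M p K') :
    ∃ c > 0, ∃ y ∈ Cset M p N ρin ρf, Benergy M p N y.1 y.2 ≠ ⊤ ∧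
      ∀ i, interiorDens y.1 i = c := by
  have hM : 0 < ∑ K', coarseM M p K' :=
    Finset.sum_pos (fun K' _ => hp K') (Finset.nonempty_of_sum_ne_zero hmasspos.ne')
  set c := (∑ K', ρin K' * coarseM M p K') / ∑ K', coarseM M p K'
  have hc : 0 < c := div_pos hmasspos hM
  have hcmass : c * ∑ K', coarseM M p K' = ∑ K', ρin K' * coarseM M p K' :=
    div_mul_cancel₀ _ hM.ne'
  obtain ⟨F, hF⟩ := exists_contEq M p hconn (constInteriorPath N ρin ρf c) fun k => by
    rw [sum_constInteriorPath_mul _ hmass hcmass, sum_constInteriorPath_mul _ hmass hcmass]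
  refine ⟨c, hc, (constInteriorPath N ρin ρf c, F), ⟨?_, ?_, hF⟩,
    Benergy_ne_top_of_pos M p F (constInteriorPath_nonneg hin hf hc.le)
      (constInteriorPath_succ_add_castSucc_pos hN hin hf hc), interiorDens_constInteriorPath⟩
  · simp [constInteriorPath]
  · simp [constInteriorPath]

end Competitor

section Barrier
variable {T T' E : Type*} [Fintype T] [DecidableEq T'] (M : Mesh T E) (p : T → T') {N : ℕ}

noncomputable def barrierWeight (N : ℕ) (i : Fin N × T') : ℝ := coarseM M p i.2 / (N+1)

lemma barrierWeight_pos (hp : ∀ K', 0 < coarseM M p K') (i : Fin N × T') :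
    0 < barrierWeight M p N i :=
  div_pos (hp i.2) (by positivity)

variable [Fintype T']

noncomputable def barrierSum (N : ℕ) (ρ : Fin (N+2) → T' → ℝ) : ℝ :=
  ∑ i, barrierWeight M p N i * -Real.log (interiorDens ρ i)

lemma Jlog_mul_ne_bot (x : ℝ) {m : ℝ} (hm : 0 ≤ m) : Jlog x * m ≠ ⊥ := by
  rw [mul_comm]
  refine EReal.coe_mul_ne_bot hm ?_
  unfold Jlog
  split_ifs
  exacts [EReal.coe_ne_bot _, top_ne_bot]

lemma Jbar_ne_bot (hp : ∀ K', 0 < coarseM M p K') (ρ : Fin (N+2) → T' → ℝ) : Jbar M p N ρ ≠ ⊥ :=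
  EReal.sum_ne_bot fun _ _ => EReal.coe_mul_ne_bot (by positivity) <|
    EReal.sum_ne_bot fun K' _ => Jlog_mul_ne_bot _ (hp K').le

lemma Jbar_eq_top (hp : ∀ K', 0 < coarseM M p K') {ρ : Fin (N+2) → T' → ℝ} (i : Fin N × T')
    (hi : interiorDens ρ i ≤ 0) : Jbar M p N ρ = ⊤ := by
  refine EReal.sum_eq_top_of_ne_bot (fun _ _ => EReal.coe_mul_ne_bot (by positivity) <|
    EReal.sum_ne_bot fun K' _ => Jlog_mul_ne_bot _ (hp K').le) (Finset.mem_univ i.1) ?_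
  rw [EReal.sum_eq_top_of_ne_bot (fun K' _ => Jlog_mul_ne_bot _ (hp K').le) (Finset.mem_univ i.2),
    EReal.coe_mul_top_of_pos (by positivity)]
  rw [Jlog, if_neg (show ¬ 0 < ρ i.1.succ.castSucc i.2 from hi.not_gt),
    EReal.top_mul_coe_of_pos (hp i.2)]

lemma Jbar_eq_barrierSum {ρ : Fin (N+2) → T' → ℝ} (hρ : ∀ i, 0 < interiorDens ρ i) :
    Jbar M p N ρ = barrierSum M p N ρ := by
  rw [barrierSum, Fintype.sum_prod_type, EReal.coe_finsetSum]
  refine Finset.sum_congr rfl fun k _ => ?_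
  have hterm (K' : T') : Jlog (ρ k.succ.castSucc K') * (coarseM M p K' : EReal) =
      ((-Real.log (ρ k.succ.castSucc K') * coarseM M p K' : ℝ) : EReal) := by
    rw [Jlog, if_pos (show 0 < ρ k.succ.castSucc K' from hρ (k, K')), EReal.coe_mul]
  simp only [hterm, ← EReal.coe_finsetSum, ← EReal.coe_mul, Finset.mul_sum, barrierWeight,
    interiorDens]
  congr 1
  exact Finset.sum_congr rfl fun K' _ => by ring

lemma barrierSum_sub_eq (ρ ρ' : Fin (N+2) → T' → ℝ) :
    barrierSum M p N ρ - barrierSum M p N ρ' = ∑ i, barrierWeight M p N i *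
      (Real.log (interiorDens ρ' i) - Real.log (interiorDens ρ i)) := by
  rw [barrierSum, barrierSum, ← Finset.sum_sub_distrib]
  exact Finset.sum_congr rfl fun i _ => by ring

variable [Fintype E]

lemma Pobj_eq_coe {μ : ℝ} {ρ : Fin (N+2) → T' → ℝ} {F : Fin (N+1) → E → ℝ}
    (hB : Benergy M p N ρ F ≠ ⊤) (hρ : ∀ i, 0 < interiorDens ρ i) :
    Pobj M p N μ ρ F = ((Benergy M p N ρ F).toReal + μ * barrierSum M p N ρ : ℝ) := by
  rw [Pobj, Jbar_eq_barrierSum M p hρ, EReal.coe_add, EReal.coe_mul,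
    ← EReal.coe_ennreal_toReal hB]

lemma Benergy_ne_top_and_pos_of_Pobj_ne_top (hp : ∀ K', 0 < coarseM M p K') {μ : ℝ} (hμ : 0 < μ)
    {ρ : Fin (N+2) → T' → ℝ} {F : Fin (N+1) → E → ℝ} (h : Pobj M p N μ ρ F ≠ ⊤) :
    Benergy M p N ρ F ≠ ⊤ ∧ ∀ i, 0 < interiorDens ρ i := by
  refine ⟨fun hB => h ?_, fun i => not_le.1 fun hi => h ?_⟩
  · rw [Pobj, hB, EReal.coe_ennreal_top,
      EReal.top_add_of_ne_bot (EReal.coe_mul_ne_bot hμ.le (Jbar_ne_bot M p hp ρ))]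
  · rw [Pobj, Jbar_eq_top M p hp i hi, EReal.coe_mul_top_of_pos hμ,
      EReal.add_top_of_ne_bot (EReal.coe_ennreal_ne_bot _)]

end Barrier

section Estimates
open Real

lemma neg_log_two_le_log_mix_sub_log {a c t : ℝ} (ha : 0 < a) (hc : 0 ≤ c) (ht : 0 ≤ t)
    (ht2 : t ≤ 1/2) : -log 2 ≤ log ((1-t) * a + t * c) - log a := by
  have h := log_le_log (by positivity) (show a / 2 ≤ (1-t) * a + t * c by nlinarith)
  rw [log_div ha.ne' two_ne_zero] at h
  linarith

lemma sum_log_mix_sub_log_ge {ι : Type*} {s : Finset ι} {w a c : ι → ℝ} {t : ℝ}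
    (hw : ∀ i ∈ s, 0 ≤ w i) (ha : ∀ i ∈ s, 0 < a i) (hc : ∀ i ∈ s, 0 < c i) (ht : 0 < t)
    (ht2 : t ≤ 1/2) {i₀ : ι} (hi₀ : i₀ ∈ s) :
    w i₀ * (log (t * c i₀) - log (a i₀)) - log 2 * ∑ i ∈ s, w i ≤
      ∑ i ∈ s, w i * (log ((1-t) * a i + t * c i) - log (a i)) := by
  have hg (i) (hi : i ∈ s) : 0 ≤ w i * (log ((1-t) * a i + t * c i) - log (a i)) + log 2 * w i := by
    have := neg_log_two_le_log_mix_sub_log (ha i hi) (hc i hi).le ht.le ht2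
    have := hw i hi
    nlinarith
  have h₀ : w i₀ * (log (t * c i₀) - log (a i₀)) ≤
      w i₀ * (log ((1-t) * a i₀ + t * c i₀) - log (a i₀)) + log 2 * w i₀ := by
    have := ha i₀ hi₀
    have := hc i₀ hi₀
    have hmix := log_le_log (by positivity) (show t * c i₀ ≤ (1-t) * a i₀ + t * c i₀ by nlinarith)
    have := hw i₀ hi₀
    have : 0 ≤ log 2 := log_nonneg one_le_two
    nlinarith
  have := Finset.single_le_sum hg hi₀
  rw [Finset.sum_add_distrib, ← Finset.mul_sum] at this
  linarith

lemma mul_exp_neg_div_le_of_mul_log_sub_le {u a w w₀ R : ℝ} (hu : 0 < u) (ha : 0 < a)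
    (hw₀ : 0 < w₀) (hw : w₀ ≤ w) (hR : 0 ≤ R) (h : w * (log u - log a) ≤ R) :
    u * exp (-(R / w₀)) ≤ a := by
  have hlog : log u - log a ≤ R / w₀ := by
    rw [le_div_iff₀ hw₀]
    rcases le_or_gt (log u - log a) 0 with hneg | hpos <;> nlinarith
  calc u * exp (-(R / w₀)) = exp (log u - R / w₀) := by
        rw [exp_sub, exp_log hu, exp_neg, ← div_eq_mul_inv]
    _ ≤ exp (log a) := exp_le_exp.2 (by linarith)
    _ = a := exp_log ha

end Estimates

section Minimizer
variable {T T' E : Type*} [Fintype T] [Fintype T'] [Fintype E] [DecidableEq T] [DecidableEq T']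
  (M : Mesh T E) (p : T → T') {N : ℕ} {ρin ρf : T' → ℝ}

lemma mul_sum_log_mix_sub_log_le {μ t : ℝ} (ht : 0 ≤ t) (ht1 : t < 1)
    {x y : (Fin (N+2) → T' → ℝ) × (Fin (N+1) → E → ℝ)}
    (hx : x ∈ Cset M p N ρin ρf) (hy : y ∈ Cset M p N ρin ρf)
    (hmin : ∀ z ∈ Cset M p N ρin ρf, Pobj M p N μ x.1 x.2 ≤ Pobj M p N μ z.1 z.2)
    (hxB : Benergy M p N x.1 x.2 ≠ ⊤) (hxρ : ∀ i, 0 < interiorDens x.1 i)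
    (hyB : Benergy M p N y.1 y.2 ≠ ⊤) (hyρ : ∀ i, 0 < interiorDens y.1 i) :
    μ * ∑ i, barrierWeight M p N i * (Real.log ((1-t) * interiorDens x.1 i +
      t * interiorDens y.1 i) - Real.log (interiorDens x.1 i)) ≤
      t * (Benergy M p N y.1 y.2).toReal := by
  set z := (1-t) • x + t • y
  have hz : z ∈ Cset M p N ρin ρf := convex_Cset M p ρin ρf hx hy (by linarith) ht (by ring)
  have hzρ (i : Fin N × T') : interiorDens z.1 i = (1-t) * interiorDens x.1 i +
      t * interiorDens y.1 i := rfl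
  have hzB : Benergy M p N z.1 z.2 ≤ ENNReal.ofReal (1-t) * Benergy M p N x.1 x.2 +
      ENNReal.ofReal t * Benergy M p N y.1 y.2 :=
    Benergy_smul_add_le M p x.2 y.2 (nonneg_of_Benergy_ne_top M p hxB)
      (nonneg_of_Benergy_ne_top M p hyB) (by linarith : 0 ≤ 1 - t) ht
  have hrhs : ENNReal.ofReal (1-t) * Benergy M p N x.1 x.2 +
      ENNReal.ofReal t * Benergy M p N y.1 y.2 ≠ ⊤ := by finiteness
  have hzB_real := ENNReal.toReal_mono hrhs hzB
  rw [ENNReal.toReal_add (by finiteness) (by finiteness), ENNReal.toReal_mul, ENNReal.toReal_mul,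
    ENNReal.toReal_ofReal (by linarith), ENNReal.toReal_ofReal ht] at hzB_real
  have hcmp := hmin z hz
  rw [Pobj_eq_coe M p hxB hxρ, Pobj_eq_coe M p (ne_top_of_le_ne_top hrhs hzB) fun i => by
    rw [hzρ]; nlinarith [hxρ i, hyρ i], EReal.coe_le_coe_iff] at hcmp
  simp only [← hzρ, ← barrierSum_sub_eq]
  nlinarith [ENNReal.toReal_nonneg (a := Benergy M p N x.1 x.2)]

end Minimizer

end OTFV

theorem barrier_positivity_general
    {T T' E : Type*} [Fintype T] [Fintype T'] [Fintype E] [DecidableEq T] [DecidableEq T']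
    (M : Mesh T E) (hconn : MeshConnected M) (p : T → T') (N : ℕ)
    (hp : ∀ K', 0 < coarseM M p K')
    (ρin ρf : T' → ℝ) (hin : ∀ K', 0 ≤ ρin K') (hf : ∀ K', 0 ≤ ρf K')
    (hmass : ∑ K', ρin K' * coarseM M p K' = ∑ K', ρf K' * coarseM M p K')
    (hmasspos : 0 < ∑ K', ρin K' * coarseM M p K') :
    ∃ C > 0, ∀ μ : ℝ, 0 < μ → μ ≤ 1 →
      ∀ x ∈ Cset M p N ρin ρf,
        (∀ y ∈ Cset M p N ρin ρf, Pobj M p N μ x.1 x.2 ≤ Pobj M p N μ y.1 y.2) →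
        ∀ (k : Fin N) (K' : T'), C * μ ≤ x.1 k.succ.castSucc K' := by
  rcases Nat.eq_zero_or_pos N with rfl | hN
  · exact ⟨1, one_pos, fun _ _ _ _ _ _ k => k.elim0⟩
  rcases isEmpty_or_nonempty T' with hT' | hT'
  · exact ⟨1, one_pos, fun _ _ _ _ _ _ _ K' => isEmptyElim K'⟩
  obtain ⟨c, hc, y, hy, hyB, hyc⟩ :=
    exists_mem_Cset_interior_eq_const M hconn p hN hp hin hf hmass hmasspos
  obtain ⟨K₁, -, hK₁⟩ := Finset.exists_min_image Finset.univ (coarseM M p) Finset.univ_nonempty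
  set R := (Benergy M p N y.1 y.2).toReal / 2 + Real.log 2 * ∑ i, barrierWeight M p N i with hR_def
  have hR : 0 ≤ R := add_nonneg (by positivity) <| mul_nonneg (Real.log_nonneg one_le_two) <|
    Finset.sum_nonneg fun i _ => (barrierWeight_pos M p hp i).le
  refine ⟨c / 2 * Real.exp (-(R / (coarseM M p K₁ / (N+1)))), by positivity,
    fun μ hμ hμ1 x hx hmin k K' => ?_⟩
  have hyρ (i : Fin N × T') : 0 < interiorDens y.1 i := hyc i ▸ hc
  obtain ⟨hxB, hxρ⟩ := Benergy_ne_top_and_pos_of_Pobj_ne_top M p hp hμ <|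
    ne_top_of_le_ne_top (by rw [Pobj_eq_coe M p hyB hyρ]; exact EReal.coe_ne_top _) (hmin y hy)
  have hgain := le_of_mul_le_mul_left ((mul_sum_log_mix_sub_log_le M p (t := μ/2) (by positivity)
    (by linarith) hx hy hmin hxB hxρ hyB hyρ).trans_eq (mul_comm_div _ _ _)) hμ
  have hlow := sum_log_mix_sub_log_ge (t := μ/2) (w := barrierWeight M p N)
    (a := interiorDens x.1) (c := interiorDens y.1) (fun i _ => (barrierWeight_pos M p hp i).le)
    (fun i _ => hxρ i) (fun i _ => hyρ i) (by positivity) (by linarith) (Finset.mem_univ (k, K'))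
  rw [hyc] at hlow
  have hbound := mul_exp_neg_div_le_of_mul_log_sub_le (w := barrierWeight M p N (k, K'))
    (mul_pos (half_pos hμ) hc) (hxρ (k, K')) (div_pos (hp K₁) (by positivity))
    (div_le_div_of_nonneg_right (hK₁ K' (Finset.mem_univ _)) (by positivity)) hR (by linarith)
  show _ ≤ interiorDens x.1 (k, K')
  convert hbound using 1
  ring

theorem barrier_positivity
    {T T' E : Type*} [Fintype T] [Fintype T'] [Fintype E] [DecidableEq T] [DecidableEq T']
    (M : Mesh T E) (hconn : MeshConnected M) (p : T → T') (N : ℕ)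
    (hp : ∀ K', 0 < coarseM M p K')
    (ρin ρf : T' → ℝ) (hin : ∀ K', 0 ≤ ρin K') (hf : ∀ K', 0 ≤ ρf K')
    (hmass : ∑ K', ρin K' * coarseM M p K' = ∑ K', ρf K' * coarseM M p K')
    (hmasspos : 0 < ∑ K', ρin K' * coarseM M p K')
    (xh : (Fin (N+2) → T' → ℝ) × (Fin (N+1) → E → ℝ))
    (hxh : xh ∈ Cset M p N ρin ρf) (hfin : Benergy M p N xh.1 xh.2 ≠ ⊤) :
    ∃ C > 0, ∀ μ : ℝ, 0 < μ → μ ≤ 1 →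
      ∀ x ∈ Cset M p N ρin ρf,
        (∀ y ∈ Cset M p N ρin ρf, Pobj M p N μ x.1 x.2 ≤ Pobj M p N μ y.1 y.2) →
        ∀ (k : Fin N) (K' : T'), C * μ ≤ x.1 k.succ.castSucc K' :=
  barrier_positivity_general M hconn p N hp ρin ρf hin hf hmass hmasspos
end

section
/- Discrete weak duality: for every (ρ, F) ∈ 𝒞_{N,𝒯} and every φ = (φ^k)_{k=1}^{N+1} ∈ (ℝ^𝒯)^{N+1} satisfying, componentwise in ℝ^{𝒯'} for every k ∈ {1,…,N}, 𝕀*((φ^{k+1} − φ^k)/τ) + (1/4) R_{𝒯'}((∇_Σ φ^k)² + (∇_Σ φ^{k+1})²) ≤ 0, it holds that B_{N,𝒯}(ρ, F) ≥ ⟨𝕀*φ^{N+1} − (τ/4) R_{𝒯'}(∇_Σ φ^{N+1})², ρ^f⟩_{𝒯'} − ⟨𝕀*φ^1 + (τ/4) R_{𝒯'}(∇_Σ φ^1)², ρ^in⟩_{𝒯'}. -/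
open scoped BigOperators ENNReal RealInnerProductSpace
open Finset

open OTFV

/-! Testing the continuity equation of step `k` against `φ^k` and integrating by parts turns
`⟨𝕀*φ^k, ρ^k - ρ^{k-1}⟩` into `τ ∑_σ F^k_σ (∇φ^k)_σ m_σ d_σ`. Young's inequality
`F g - g² r / 2 ≤ F² / (2 r)`, with `r` the reconstructed mean density of the step, bounds this by
the action of step `k` plus `(τ/4) ⟨R (∇φ^k)², ρ^k + ρ^{k-1}⟩`. Summing by parts over `k` leaves
the two boundary pairings of the claim and, at each interior time, the pairing of `ρ^k ≥ 0` with
the left-hand side of the constraint on `φ`, which is nonpositive. -/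

theorem Fin.sub_eq_sum_sub_add_sum_succ_sub {R : Type*} [AddCommGroup R] {n : ℕ}
    (a b : Fin (n + 1) → R) :
    a (Fin.last n) - b 0 = ∑ k, (a k - b k) + ∑ k : Fin n, (b k.succ - a k.castSucc) := by
  rw [sum_sub_distrib, sum_sub_distrib, Fin.sum_univ_castSucc a, Fin.sum_univ_succ b]
  abel

theorem ENNReal.ofReal_sum_le {ι : Type*} (s : Finset ι) (f : ι → ℝ) :
    ENNReal.ofReal (∑ i ∈ s, f i) ≤ ∑ i ∈ s, ENNReal.ofReal (f i) :=
  le_sum_of_subadditive ENNReal.ofReal ENNReal.ofReal_zero.le (fun _ _ => ENNReal.ofReal_add_le) s f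

namespace OTFV

variable {T T' E : Type*}

theorem ofReal_young_le_Bact {r : ℝ} (hr : 0 ≤ r) (q g : ℝ) :
    ENNReal.ofReal (q * g - g ^ 2 * r / 2) ≤ Bact r q := by
  unfold Bact
  split_ifs with hpos hzero
  · gcongr
    rw [le_div_iff₀ (by positivity)]
    nlinarith [sq_nonneg (q - r * g)]
  · obtain ⟨rfl, rfl⟩ := hzero
    simp
  · exact le_top

theorem linRec_nonneg (M : Mesh T E) {a : T → ℝ} (ha : ∀ K, 0 ≤ a K) (σ : E) :
    0 ≤ linRec M a σ :=
  add_nonneg (mul_nonneg (div_nonneg (M.d1_pos σ).le (M.dS_pos σ).le) (ha _))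
    (mul_nonneg (div_nonneg (M.d2_pos σ).le (M.dS_pos σ).le) (ha _))

theorem coarseM_nonneg [Fintype T] [DecidableEq T'] (M : Mesh T E) (p : T → T') (K' : T') :
    0 ≤ coarseM M p K' :=
  sum_nonneg fun K _ => (M.m_pos K).le

/-- An empty coarse cell has mass `0` and contributes `0` to both sides, so the junk division by its
mass in `injAdj` is harmless. -/
theorem iprodC_injAdj [Fintype T] [Fintype T'] [DecidableEq T'] (M : Mesh T E) (p : T → T')
    (a : T → ℝ) (b : T' → ℝ) :
    iprodC M p (injAdj M p a) b = ∑ K, a K * b (p K) * M.m K := by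
  rw [← sum_fiberwise univ p]
  refine sum_congr rfl fun K' _ => ?_
  have hempty : coarseM M p K' = 0 → ∑ K ∈ univ.filter (fun K => p K = K'), a K * M.m K = 0 := by
    intro h
    rw [coarseM, sum_eq_zero_iff_of_nonneg fun K _ => (M.m_pos K).le] at h
    exact sum_eq_zero fun K hK => by rw [h K hK, mul_zero]
  rw [injAdj, mul_right_comm, div_mul_cancel_of_imp hempty, sum_mul]
  refine sum_congr rfl fun K hK => ?_
  rw [(mem_filter.mp hK).2]
  ring

theorem sum_linRecAdj_mul [Fintype T] [Fintype E] [DecidableEq T] (M : Mesh T E) (u : E → ℝ)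
    (c : T → ℝ) :
    ∑ K, linRecAdj M u K * c K * M.m K = ∑ σ, u σ * linRec M c σ * (M.mS σ * M.dS σ) := by
  have hcancel : ∀ K, linRecAdj M u K * c K * M.m K = ∑ σ, c K *
      ((if M.e1 σ = K then u σ * M.mS σ * M.d1 σ else 0) +
        (if M.e2 σ = K then u σ * M.mS σ * M.d2 σ else 0)) := fun K => by
    rw [linRecAdj, mul_right_comm, div_mul_cancel₀ _ (M.m_pos K).ne', mul_comm, mul_sum]
  simp only [hcancel]
  rw [sum_comm]
  refine sum_congr rfl fun σ _ => ?_
  simp only [mul_add, mul_ite, mul_zero, sum_add_distrib, sum_ite_eq, mem_univ, if_true]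
  have := (M.dS_pos σ).ne'
  rw [linRec]
  field_simp

theorem iprodC_coarseRec [Fintype T] [Fintype T'] [Fintype E] [DecidableEq T] [DecidableEq T']
    (M : Mesh T E) (p : T → T') (u : E → ℝ) (b : T' → ℝ) :
    iprodC M p (coarseRec M p u) b = ∑ σ, u σ * linRec M (inj p b) σ * (M.mS σ * M.dS σ) :=
  (iprodC_injAdj M p _ b).trans (sum_linRecAdj_mul M u (inj p b))

theorem iprodC_injAdj_add_coarseRec [Fintype T] [Fintype T'] [Fintype E] [DecidableEq T]
    [DecidableEq T'] (M : Mesh T E) (p : T → T') (a : T → ℝ) (c : ℝ)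
    (u : E → ℝ) (b : T' → ℝ) :
    iprodC M p (fun K' => injAdj M p a K' + c * coarseRec M p u K') b
      = ∑ K, a K * b (p K) * M.m K
        + c * ∑ σ, u σ * linRec M (inj p b) σ * (M.mS σ * M.dS σ) := by
  rw [← iprodC_injAdj, ← iprodC_coarseRec, iprodC, iprodC, iprodC, mul_sum, ← sum_add_distrib]
  exact sum_congr rfl fun K' _ => by ring

theorem sum_mul_divT [Fintype T] [Fintype E] [DecidableEq T] (M : Mesh T E) (ψ : T → ℝ)
    (G : E → ℝ) :
    ∑ K, ψ K * divT M G K * M.m K = -∑ σ, G σ * gradS M ψ σ * (M.mS σ * M.dS σ) := by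
  have hcancel : ∀ K, ψ K * divT M G K * M.m K = ∑ σ, ψ K *
      (((if M.e1 σ = K then G σ else 0) + (if M.e2 σ = K then -G σ else 0)) * M.mS σ) := fun K => by
    rw [divT, mul_assoc, div_mul_cancel₀ _ (M.m_pos K).ne', mul_sum]
  simp only [hcancel]
  rw [sum_comm, ← sum_neg_distrib]
  refine sum_congr rfl fun σ _ => ?_
  simp only [mul_add, add_mul, mul_ite, ite_mul, mul_zero, zero_mul, sum_add_distrib, sum_ite_eq,
    mem_univ, if_true]
  have := (M.dS_pos σ).ne'
  rw [gradS]
  field_simp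
  ring

theorem iprodC_sub_iprodC_of_continuity [Fintype T] [Fintype T'] [Fintype E] [DecidableEq T]
    [DecidableEq T'] (M : Mesh T E) (p : T → T') {τ : ℝ} (hτ : τ ≠ 0) (φ : T → ℝ) (F : E → ℝ)
    {ρ₀ ρ₁ : T' → ℝ} (hce : ∀ K, (ρ₁ (p K) - ρ₀ (p K)) / τ + divT M F K = 0) :
    iprodC M p (fun K' => injAdj M p φ K' - τ / 4 * coarseRec M p (fun σ => (gradS M φ σ)^2) K') ρ₁
      - iprodC M p
          (fun K' => injAdj M p φ K' + τ / 4 * coarseRec M p (fun σ => (gradS M φ σ)^2) K') ρ₀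
      = τ * ∑ σ, (F σ * gradS M φ σ
          - (gradS M φ σ)^2 * linRec M (inj p (fun K' => (ρ₁ K' + ρ₀ K') / 2)) σ / 2)
          * (M.mS σ * M.dS σ) := by
  have hjump : ∀ K, ρ₁ (p K) - ρ₀ (p K) = -τ * divT M F K := fun K => by
    have h := eq_neg_of_add_eq_zero_left (hce K)
    rw [div_eq_iff hτ] at h
    linarith
  have hA : ∑ K, φ K * ρ₁ (p K) * M.m K - ∑ K, φ K * ρ₀ (p K) * M.m K
      = τ * ∑ σ, F σ * gradS M φ σ * (M.mS σ * M.dS σ) := by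
    rw [← sum_sub_distrib]
    calc _ = -τ * ∑ K, φ K * divT M F K * M.m K := by
          rw [mul_sum]
          exact sum_congr rfl fun K _ => by linear_combination (φ K * M.m K) * hjump K
      _ = _ := by rw [sum_mul_divT]; ring
  have hQ : ∑ σ, (gradS M φ σ)^2 * linRec M (inj p ρ₁) σ * (M.mS σ * M.dS σ)
        + ∑ σ, (gradS M φ σ)^2 * linRec M (inj p ρ₀) σ * (M.mS σ * M.dS σ)
      = 2 * ∑ σ, (gradS M φ σ)^2 * linRec M (inj p (fun K' => (ρ₁ K' + ρ₀ K') / 2)) σ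
          * (M.mS σ * M.dS σ) := by
    rw [← sum_add_distrib, mul_sum]
    exact sum_congr rfl fun σ _ => by simp only [linRec, inj]; ring
  have hsplit : ∑ σ, (F σ * gradS M φ σ
        - (gradS M φ σ)^2 * linRec M (inj p (fun K' => (ρ₁ K' + ρ₀ K') / 2)) σ / 2)
        * (M.mS σ * M.dS σ)
      = ∑ σ, F σ * gradS M φ σ * (M.mS σ * M.dS σ)
        - (∑ σ, (gradS M φ σ)^2 * linRec M (inj p (fun K' => (ρ₁ K' + ρ₀ K') / 2)) σ
          * (M.mS σ * M.dS σ)) / 2 := by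
    rw [sum_div, ← sum_sub_distrib]
    exact sum_congr rfl fun σ _ => by ring
  simp only [sub_eq_add_neg (injAdj M p φ _), ← neg_mul]
  rw [iprodC_injAdj_add_coarseRec, iprodC_injAdj_add_coarseRec, hsplit]
  linear_combination hA - τ / 4 * hQ

theorem iprodC_sub_iprodC_nonpos [Fintype T] [Fintype T'] [Fintype E] [DecidableEq T]
    [DecidableEq T'] (M : Mesh T E) (p : T → T') {τ : ℝ} (hτ : 0 < τ) (φ φ' : T → ℝ)
    {ρ : T' → ℝ} (hρ : ∀ K', 0 ≤ ρ K')
    (hφ : ∀ K', injAdj M p (fun K => (φ' K - φ K) / τ) K' + 1 / 4 * coarseRec M p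
      (fun σ => (gradS M φ σ)^2 + (gradS M φ' σ)^2) K' ≤ 0) :
    iprodC M p (fun K' => injAdj M p φ' K' + τ / 4 * coarseRec M p (fun σ => (gradS M φ' σ)^2) K') ρ
      - iprodC M p
          (fun K' => injAdj M p φ K' - τ / 4 * coarseRec M p (fun σ => (gradS M φ σ)^2) K') ρ
      ≤ 0 := by
  have hpair : iprodC M p (fun K' => injAdj M p (fun K => (φ' K - φ K) / τ) K' + 1 / 4 *
      coarseRec M p (fun σ => (gradS M φ σ)^2 + (gradS M φ' σ)^2) K') ρ ≤ 0 :=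
    sum_nonpos fun K' _ => mul_nonpos_of_nonpos_of_nonneg
      (mul_nonpos_of_nonpos_of_nonneg (hφ K') (hρ K')) (coarseM_nonneg M p K')
  have hA : ∑ K, (φ' K - φ K) / τ * ρ (p K) * M.m K
      = (∑ K, φ' K * ρ (p K) * M.m K - ∑ K, φ K * ρ (p K) * M.m K) / τ := by
    rw [← sum_sub_distrib, sum_div]
    exact sum_congr rfl fun K _ => by ring
  have hQ : ∑ σ, ((gradS M φ σ)^2 + (gradS M φ' σ)^2) * linRec M (inj p ρ) σ * (M.mS σ * M.dS σ)
      = ∑ σ, (gradS M φ σ)^2 * linRec M (inj p ρ) σ * (M.mS σ * M.dS σ)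
        + ∑ σ, (gradS M φ' σ)^2 * linRec M (inj p ρ) σ * (M.mS σ * M.dS σ) := by
    rw [← sum_add_distrib]
    exact sum_congr rfl fun σ _ => by ring
  rw [iprodC_injAdj_add_coarseRec, hA, hQ] at hpair
  simp only [sub_eq_add_neg (injAdj M p φ _), ← neg_mul]
  rw [iprodC_injAdj_add_coarseRec, iprodC_injAdj_add_coarseRec]
  calc _ = τ * ((∑ K, φ' K * ρ (p K) * M.m K - ∑ K, φ K * ρ (p K) * M.m K) / τ
        + 1 / 4 * (∑ σ, (gradS M φ σ)^2 * linRec M (inj p ρ) σ * (M.mS σ * M.dS σ)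
          + ∑ σ, (gradS M φ' σ)^2 * linRec M (inj p ρ) σ * (M.mS σ * M.dS σ))) := by
        field_simp
        ring
    _ ≤ 0 := mul_nonpos_of_nonneg_of_nonpos hτ.le hpair

theorem ofReal_sum_young_le_Benergy [Fintype E] [Fintype T'] (M : Mesh T E) (p : T → T') (N : ℕ)
    (ρ : Fin (N+2) → T' → ℝ) (F g : Fin (N+1) → E → ℝ) :
    ENNReal.ofReal (∑ k, (1:ℝ)/(N+1) * ∑ σ, (F k σ * g k σ - (g k σ)^2
        * linRec M (inj p (fun K' => (ρ k.succ K' + ρ k.castSucc K') / 2)) σ / 2)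
        * (M.mS σ * M.dS σ))
      ≤ Benergy M p N ρ F := by
  unfold Benergy
  split_ifs with hρ
  swap
  · exact le_top
  refine (ENNReal.ofReal_sum_le _ _).trans (sum_le_sum fun k _ => ?_)
  rw [ENNReal.ofReal_mul (by positivity)]
  gcongr
  refine (ENNReal.ofReal_sum_le _ _).trans (sum_le_sum fun σ _ => ?_)
  rw [ENNReal.ofReal_mul' (mul_pos (M.mS_pos σ) (M.dS_pos σ)).le]
  gcongr
  refine ofReal_young_le_Bact (linRec_nonneg M (fun K => ?_) σ) _ _
  exact div_nonneg (add_nonneg (hρ _ _) (hρ _ _)) zero_le_two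

end OTFV

open OTFV

theorem weak_duality_general
    {T T' E : Type*} [Fintype T] [Fintype T'] [Fintype E] [DecidableEq T] [DecidableEq T']
    (M : Mesh T E) (p : T → T') (N : ℕ) (ρin ρf : T' → ℝ)
    (x : (Fin (N+2) → T' → ℝ) × (Fin (N+1) → E → ℝ)) (hx : x ∈ Cset M p N ρin ρf)
    (φ : Fin (N+1) → T → ℝ)
    (hφ : ∀ (k : Fin N) (K' : T'),
      injAdj M p (fun K => (φ k.succ K - φ k.castSucc K) / ((1:ℝ)/(N+1))) K' +
        (1/4) * coarseRec M p
          (fun σ => (gradS M (φ k.castSucc) σ)^2 + (gradS M (φ k.succ) σ)^2) K' ≤ 0) :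
    ((iprodC M p (fun K' => injAdj M p (φ (Fin.last N)) K' -
        (((1:ℝ)/(N+1))/4) * coarseRec M p (fun σ => (gradS M (φ (Fin.last N)) σ)^2) K') ρf -
      iprodC M p (fun K' => injAdj M p (φ 0) K' +
        (((1:ℝ)/(N+1))/4) * coarseRec M p (fun σ => (gradS M (φ 0) σ)^2) K') ρin : ℝ) : EReal)
      ≤ (Benergy M p N x.1 x.2 : EReal) := by
  obtain ⟨h0, hlast, hce⟩ := hx
  have hτ : (0:ℝ) < 1 / (N+1) := by positivity
  by_cases hρ : ∀ k K', 0 ≤ x.1 k K'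
  swap
  · rw [Benergy, if_neg hρ, EReal.coe_ennreal_top]
    exact le_top
  set a : Fin (N+1) → ℝ := fun k => iprodC M p (fun K' => injAdj M p (φ k) K'
    - (1 / (N+1)) / 4 * coarseRec M p (fun σ => (gradS M (φ k) σ)^2) K') (x.1 k.succ) with ha
  set b : Fin (N+1) → ℝ := fun k => iprodC M p (fun K' => injAdj M p (φ k) K'
    + (1 / (N+1)) / 4 * coarseRec M p (fun σ => (gradS M (φ k) σ)^2) K') (x.1 k.castSucc) with hb
  have hbound : a (Fin.last N) - b 0 ≤ ∑ k, (1:ℝ)/(N+1) * ∑ σ, (x.2 k σ * gradS M (φ k) σ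
      - (gradS M (φ k) σ)^2
        * linRec M (inj p (fun K' => (x.1 k.succ K' + x.1 k.castSucc K') / 2)) σ / 2)
      * (M.mS σ * M.dS σ) := by
    rw [Fin.sub_eq_sum_sub_add_sum_succ_sub]
    refine add_le_of_le_of_nonpos (le_of_eq (sum_congr rfl fun k _ =>
      iprodC_sub_iprodC_of_continuity M p hτ.ne' _ _ (hce k))) (sum_nonpos fun k _ => ?_)
    simp only [ha, hb, Fin.succ_castSucc]
    exact iprodC_sub_iprodC_nonpos M p hτ _ _ (hρ _) (hφ k)
  calc _ = ((a (Fin.last N) - b 0 : ℝ) : EReal) := by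
        simp only [ha, hb, Fin.succ_last, Fin.castSucc_zero, h0, hlast]
    _ ≤ (ENNReal.ofReal _ : EReal) := by
      rw [EReal.coe_ennreal_ofReal]
      exact EReal.coe_le_coe_iff.2 (hbound.trans (le_max_left _ _))
    _ ≤ _ := EReal.coe_ennreal_le_coe_ennreal_iff.2
      (ofReal_sum_young_le_Benergy M p N x.1 x.2 fun k σ => gradS M (φ k) σ)

theorem weak_duality
    {T T' E : Type*} [Fintype T] [Fintype T'] [Fintype E] [DecidableEq T] [DecidableEq T']
    (M : Mesh T E) (p : T → T') (N : ℕ) (hp : ∀ K', 0 < coarseM M p K')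
    (ρin ρf : T' → ℝ) (hin : ∀ K', 0 ≤ ρin K') (hf : ∀ K', 0 ≤ ρf K')
    (hmass : ∑ K', ρin K' * coarseM M p K' = ∑ K', ρf K' * coarseM M p K')
    (x : (Fin (N+2) → T' → ℝ) × (Fin (N+1) → E → ℝ)) (hx : x ∈ Cset M p N ρin ρf)
    (φ : Fin (N+1) → T → ℝ)
    (hφ : ∀ (k : Fin N) (K' : T'),
      injAdj M p (fun K => (φ k.succ K - φ k.castSucc K) / ((1:ℝ)/(N+1))) K' +
        (1/4) * coarseRec M p
          (fun σ => (gradS M (φ k.castSucc) σ)^2 + (gradS M (φ k.succ) σ)^2) K' ≤ 0) :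
    ((iprodC M p (fun K' => injAdj M p (φ (Fin.last N)) K' -
        (((1:ℝ)/(N+1))/4) * coarseRec M p (fun σ => (gradS M (φ (Fin.last N)) σ)^2) K') ρf -
      iprodC M p (fun K' => injAdj M p (φ 0) K' +
        (((1:ℝ)/(N+1))/4) * coarseRec M p (fun σ => (gradS M (φ 0) σ)^2) K') ρin : ℝ) : EReal)
      ≤ (Benergy M p N x.1 x.2 : EReal) :=
  weak_duality_general M p N ρin ρf x hx φ hφ
end
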